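/- For each n ≥ 1, the set N^n[E] of finite atomic measures on E whose atoms all have mass a positive-integer multiple of 1/n is a closed subset of M(E) in the weak* topology. -/

import Mathlib

open MeasureTheory NNReal

/-- The set `N^n[E]` of finite atomic measures whose atoms all have mass an
integer multiple of `1/n`. -/
def atomicMeasuresOfStep (E : Type*) [TopologicalSpace E] [MeasurableSpace E]
    (n : ℕ) : Set (FiniteMeasure E) :=
  {μ | ∃ (V : Finset ℕ) (k : ℕ → ℕ) (x : ℕ → E),
    (μ : Measure E) = ∑ i ∈ V, (((k i : ℝ≥0) / n) • Measure.dirac (x i))}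

/-!
Every `ν ∈ N^n[E]` takes its values `ν A` in `ℕ / n`, a closed discrete subset of `ℝ≥0`. If such
measures converge weakly to `μ`, the portmanteau theorem gives convergence of the masses of
`μ`-continuity sets, so `μ B ∈ ℕ / n` for every ball `B` whose boundary is `μ`-null. Shrinking
such balls to a point `x`, discreteness makes their masses eventually equal to `μ {x}`: every
point has a neighbourhood carrying no mass outside the point itself. By second countability `μ`
is then concentrated on its atoms, which are finitely many because each has mass at least `1/n`.
-/

open Filter Topology Set
open scoped ENNReal

theorem IsDiscrete.eventually_eq_of_tendsto {X ι : Type*} [TopologicalSpace X] {s : Set X}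
    (hs : IsDiscrete s) (hs' : IsClosed s) {L : Filter ι} [L.NeBot] {f : ι → X} {a : X}
    (hf : Tendsto f L (𝓝 a)) (hfs : ∀ᶠ i in L, f i ∈ s) : a ∈ s ∧ ∀ᶠ i in L, f i = a := by
  have ha := hs'.mem_of_tendsto hf hfs
  refine ⟨ha, tendsto_pure.mp ?_⟩
  rw [← hs.nhdsWithin a ha]
  exact tendsto_nhdsWithin_iff.mpr ⟨hf, hfs⟩

theorem isClosedEmbedding_natCast_div {n : ℕ} (hn : n ≠ 0) :
    IsClosedEmbedding fun m : ℕ ↦ (m : ℝ≥0) / n := by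
  have hcast : IsClosedEmbedding ((↑) : ℕ → ℝ≥0) :=
    NNReal.isClosedEmbedding_coe.of_comp_iff.mp Nat.isClosedEmbedding_coe_real
  simp_rw [div_eq_mul_inv]
  exact (Homeomorph.mulRight₀ _ (by positivity)).isClosedEmbedding.comp hcast

namespace MeasureTheory

theorem measure_setOf_measure_singleton_eq_zero {X : Type*} [TopologicalSpace X]
    [SecondCountableTopology X] [MeasurableSpace X] (μ : Measure X)
    (h : ∀ x, ∃ U ∈ 𝓝 x, μ U = μ {x}) : μ {x | μ {x} = 0} = 0 :=
  measure_null_of_locally_null _ fun x hx ↦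
    let ⟨U, hU, hUx⟩ := h x
    ⟨U, mem_nhdsWithin_of_mem_nhds hU, hUx.trans hx⟩

theorem finite_setOf_le_measure_singleton {X : Type*} [MeasurableSpace X]
    [MeasurableSingletonClass X] (μ : Measure X) [IsFiniteMeasure μ] {ε : ℝ≥0∞} (hε : 0 < ε) :
    {x | ε ≤ μ {x}}.Finite :=
  Measure.finite_const_le_meas_of_disjoint_iUnion μ hε measurableSet_singleton
    (fun _ _ h ↦ disjoint_singleton.mpr h) (measure_ne_top _ _)

namespace FiniteMeasure

theorem tendsto_measure_of_null_frontier_of_tendsto {Ω ι : Type*} {L : Filter ι}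
    [MeasurableSpace Ω] [TopologicalSpace Ω] [OpensMeasurableSpace Ω] [HasOuterApproxClosed Ω]
    {μ : FiniteMeasure Ω} {μs : ι → FiniteMeasure Ω} (hμs : Tendsto μs L (𝓝 μ))
    {B : Set Ω} (hB : μ (frontier B) = 0) : Tendsto (fun i ↦ μs i B) L (𝓝 (μ B)) := by
  rcases eq_or_ne μ 0 with rfl | hμ
  · simpa using tendsto_of_tendsto_of_tendsto_of_le_of_le tendsto_const_nhds
      (by simpa using hμs.mass) (fun i ↦ zero_le) fun i ↦ (μs i).apply_le_mass B
  have : Nonempty Ω := by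
    obtain ⟨x, -⟩ := nonempty_of_measure_ne_zero (μ := (μ : Measure Ω)) (s := univ)
      (by simpa [← ennreal_mass] using hμ)
    exact ⟨x⟩
  simp_rw [self_eq_mass_mul_normalize _ B]
  refine hμs.mass.mul (ProbabilityMeasure.tendsto_measure_of_null_frontier_of_tendsto
    (tendsto_normalize_of_tendsto hμs hμ) ?_)
  rw [normalize_eq_of_nonzero _ hμ, hB, mul_zero]

theorem measure_singleton_mem_and_exists_nhds_of_tendsto {Ω ι : Type*} [MetricSpace Ω]
    [MeasurableSpace Ω] [OpensMeasurableSpace Ω] {L : Filter ι} [L.NeBot]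
    {μ : FiniteMeasure Ω} {μs : ι → FiniteMeasure Ω} (hμs : Tendsto μs L (𝓝 μ))
    {s : Set ℝ≥0} (hs : IsDiscrete s) (hs' : IsClosed s)
    (hvals : ∀ᶠ i in L, ∀ A, MeasurableSet A → μs i A ∈ s) (x : Ω) :
    μ {x} ∈ s ∧ ∃ U ∈ 𝓝 x, μ U = μ {x} := by
  obtain ⟨rs, hrs_lim, hrs⟩ := exists_null_frontiers_thickening (μ : Measure Ω) {x}
  have hthick : ∀ j, μ (Metric.thickening (rs j) {x}) ∈ s := fun j ↦
    (hs.eventually_eq_of_tendsto hs' (tendsto_measure_of_null_frontier_of_tendsto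
      hμs ((μ.null_iff_toMeasure_null _).mpr (hrs j).2))
      (hvals.mono fun i hi ↦ hi _ Metric.isOpen_thickening.measurableSet)).1
  have hlim : Tendsto (fun j ↦ μ (Metric.thickening (rs j) {x})) atTop (𝓝 (μ {x})) :=
    (ENNReal.tendsto_toNNReal (measure_ne_top _ _)).comp <|
      (tendsto_measure_thickening_of_isClosed ⟨1, one_pos, measure_ne_top _ _⟩
        isClosed_singleton).comp <|
      tendsto_nhdsWithin_iff.mpr ⟨hrs_lim, .of_forall fun j ↦ (hrs j).1⟩
  obtain ⟨hx, hev⟩ := hs.eventually_eq_of_tendsto hs' hlim (.of_forall hthick)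
  obtain ⟨j, hj⟩ := hev.exists
  exact ⟨hx, _, Metric.isOpen_thickening.mem_nhds
    (Metric.self_subset_thickening (hrs j).1 _ (mem_singleton x)), hj⟩

end FiniteMeasure

end MeasureTheory

theorem apply_mem_range_natCast_div_of_mem_atomicMeasuresOfStep {E : Type*} [TopologicalSpace E]
    [MeasurableSpace E] {n : ℕ} {ν : FiniteMeasure E} (hν : ν ∈ atomicMeasuresOfStep E n)
    {A : Set E} (hA : MeasurableSet A) : ν A ∈ range fun m : ℕ ↦ (m : ℝ≥0) / n := by
  classical
  obtain ⟨V, k, x, hνV⟩ := hν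
  refine ⟨∑ i ∈ V with x i ∈ A, k i, ENNReal.coe_injective ?_⟩
  rw [FiniteMeasure.ennreal_coeFn_eq_coeFn_toMeasure, hνV]
  simp only [Measure.coe_finsetSum, Finset.sum_apply, Measure.smul_apply,
    Measure.dirac_apply' _ hA]
  rw [Nat.cast_sum, Finset.sum_div, Finset.sum_filter, ENNReal.ofNNReal_finsetSum]
  refine Finset.sum_congr rfl fun i _ ↦ ?_
  split_ifs with hi <;> simp [hi]

theorem mem_atomicMeasuresOfStep_of_eq_finsetSum {E : Type*} [TopologicalSpace E]
    [MeasurableSpace E] [Nonempty E] {n : ℕ} {μ : FiniteMeasure E} (s : Finset E) (k : E → ℕ)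
    (hμ : (μ : Measure E) = ∑ y ∈ s, ((k y : ℝ≥0) / n) • Measure.dirac y) :
    μ ∈ atomicMeasuresOfStep E n := by
  obtain ⟨f, hf⟩ := countable_iff_exists_injOn.mp s.countable_toSet
  refine ⟨s.image f, k ∘ Function.invFunOn f s, Function.invFunOn f s, ?_⟩
  rw [hμ, Finset.sum_image hf]
  exact Finset.sum_congr rfl fun y hy ↦ by simp only [Function.comp, hf.leftInvOn_invFunOn hy]

theorem mem_atomicMeasuresOfStep_of_forall_exists_nhds {E : Type*} [TopologicalSpace E]
    [SecondCountableTopology E] [MeasurableSpace E] [MeasurableSingletonClass E] [Nonempty E]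
    {n : ℕ} (hn : n ≠ 0) {μ : FiniteMeasure E}
    (hvals : ∀ x, μ {x} ∈ range fun m : ℕ ↦ (m : ℝ≥0) / n)
    (hloc : ∀ x, ∃ U ∈ 𝓝 x, μ U = μ {x}) : μ ∈ atomicMeasuresOfStep E n := by
  choose k hk using hvals
  have hatom : ∀ x, (μ : Measure E) {x} ≠ 0 → ((1 / n : ℝ≥0) : ℝ≥0∞) ≤ (μ : Measure E) {x} := by
    intro x hx
    rw [← FiniteMeasure.ennreal_coeFn_eq_coeFn_toMeasure, ← hk] at hx ⊢
    beta_reduce at hx ⊢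
    have hkx : k x ≠ 0 := by rintro h; simp [h] at hx
    gcongr
    exact_mod_cast Nat.one_le_iff_ne_zero.mpr hkx
  have hfin : {x | (μ : Measure E) {x} ≠ 0}.Finite :=
    (finite_setOf_le_measure_singleton _ (by simpa using Nat.pos_of_ne_zero hn)).subset hatom
  have hnull : (μ : Measure E) {x | (μ : Measure E) {x} = 0} = 0 :=
    measure_setOf_measure_singleton_eq_zero _ fun x ↦
      let ⟨U, hU, hUx⟩ := hloc x
      ⟨U, hU, by simp only [← FiniteMeasure.ennreal_coeFn_eq_coeFn_toMeasure, hUx]⟩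
  refine mem_atomicMeasuresOfStep_of_eq_finsetSum hfin.toFinset k ?_
  refine (Measure.ae_mem_finset_iff.mp (ae_iff.mpr (by simpa using hnull))).trans
    (Finset.sum_congr rfl fun y _ ↦ ?_)
  rw [← FiniteMeasure.ennreal_coeFn_eq_coeFn_toMeasure, ← hk]
  exact (ENNReal.smul_def _ _).symm

/-- for every `n ≥ 1`, `N^n[E]` is weak*-closed in the space of
finite positive Borel measures on a Polish space `E`. -/
theorem atomicMeasuresOfStep_isClosed
    {E : Type*} [TopologicalSpace E] [PolishSpace E]
    [MeasurableSpace E] [BorelSpace E] (n : ℕ) (hn : 1 ≤ n) :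
    IsClosed (atomicMeasuresOfStep E n) := by
  rcases isEmpty_or_nonempty E with hE | hE
  · have : atomicMeasuresOfStep E n = ∅ :=
      eq_empty_of_forall_notMem fun _ ⟨_, _, x, _⟩ ↦ hE.elim (x 0)
    exact this ▸ isClosed_empty
  let := TopologicalSpace.metrizableSpaceMetric E
  have hn0 : n ≠ 0 := by omega
  have hD := isClosedEmbedding_natCast_div hn0
  refine isClosed_iff_clusterPt.mpr fun μ hμ ↦ ?_
  have : (𝓝 μ ⊓ 𝓟 (atomicMeasuresOfStep E n)).NeBot := hμ
  have hvals : ∀ᶠ ν in 𝓝 μ ⊓ 𝓟 (atomicMeasuresOfStep E n),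
      ∀ A, MeasurableSet A → ν A ∈ range fun m : ℕ ↦ (m : ℝ≥0) / n :=
    mem_inf_of_right fun _ hν _ hA ↦ apply_mem_range_natCast_div_of_mem_atomicMeasuresOfStep hν hA
  obtain ⟨hsingleton, hnhds⟩ := forall_and.mp
    (FiniteMeasure.measure_singleton_mem_and_exists_nhds_of_tendsto
      (tendsto_id.mono_left inf_le_left) hD.isInducing.isDiscrete_range hD.isClosed_range hvals)
  exact mem_atomicMeasuresOfStep_of_forall_exists_nhds hn0 hsingleton hnhds
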